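/- Let R be a commutative ring, M an R-module, and y_1,...,y_r elements of R. Fix i > 0. Suppose that for every subset A of {1,...,r} and every s with max(A) < s ≤ r one has y_s · H_i(y_A; M) = 0, where H_i(y_A; M) denotes the i-th Koszul homology of M with respect to the elements indexed by A. Then for every subset A of {1,...,r}, the canonical map ∂ : H_{i+1}(y_A; M) → ⊕_{j ∈ A} H_i(y_{A∖{j}}; M), whose j-th component is the connecting map in the long exact sequence of Koszul homology, is injective. -/

import Mathlib

open Finset

section Koszul

variable {R : Type*} [CommRing R] {ι : Type*} [LinearOrder ι]

/-- Koszul chains in homological degree `i` for the subfamily indexed by `A`: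
functions from `i`-element subsets of `A` to `M`. -/
abbrev KChain (ι : Type*) (A : Finset ι) (M : Type*) (i : ℕ) :=
  {s : Finset ι // s ⊆ A ∧ s.card = i} → M

variable {M : Type*} [AddCommGroup M] [Module R M]

/-- The Koszul differential from degree `i+1` to degree `i`. -/
noncomputable def kd (y : ι → R) (A : Finset ι) (i : ℕ) :
    KChain ι A M (i + 1) →ₗ[R] KChain ι A M i where
  toFun f t := ∑ j ∈ (A \ t.1).attach,
    ((-1 : ℤ) ^ ((t.1.filter (· < j.1)).card)) •
      y j.1 • f ⟨insert j.1 t.1, by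
        obtain ⟨hjA, hjt⟩ := Finset.mem_sdiff.mp j.2
        exact ⟨Finset.insert_subset hjA t.2.1, by
          rw [Finset.card_insert_of_notMem hjt, t.2.2]⟩⟩
  map_add' f g := by
    funext t
    simp [smul_add, Finset.sum_add_distrib]
  map_smul' r f := by
    funext t
    simp only [Pi.smul_apply, RingHom.id_apply]
    rw [Finset.smul_sum]
    refine Finset.sum_congr rfl fun j _ => ?_
    rw [smul_comm r, smul_comm r]

/-- Boundaries in homological degree `i`. -/
noncomputable def kBnd (y : ι → R) (A : Finset ι) (M : Type*) [AddCommGroup M] [Module R M]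
    (i : ℕ) : Submodule R (KChain ι A M i) :=
  LinearMap.range (kd y A i)

/-- Cycles in homological degree `i`. -/
noncomputable def kCyc (y : ι → R) (A : Finset ι) (M : Type*) [AddCommGroup M] [Module R M] :
    (i : ℕ) → Submodule R (KChain ι A M i)
  | 0 => ⊤
  | (i + 1) => LinearMap.ker (kd y A i)

/-- The `i`-th Koszul homology `H_i(y_A; M)` of `M` with respect to the subfamily
of `y` indexed by `A`. -/
abbrev KoszulH (y : ι → R) (A : Finset ι) (M : Type*) [AddCommGroup M] [Module R M] (i : ℕ) :=
  ↥(kCyc y A M i) ⧸ (kBnd y A M i).comap (kCyc y A M i).subtype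

/-- The `j`-component of the canonical connecting map on cycles: the coefficient `z₁`
in the decomposition `z = z₀ + z₁ ∧ e j`. -/
noncomputable def delPart {ι : Type*} [LinearOrder ι] [DecidableEq ι] {N : Type*} [AddCommGroup N]
    {i : ℕ} (A : Finset ι) (j : ι) (hj : j ∈ A)
    (z : KChain ι A N (i + 1)) : KChain ι (A.erase j) N i :=
  fun t => ((-1 : ℤ) ^ ((t.1.filter (j < ·)).card)) •
    z ⟨insert j t.1, ⟨Finset.insert_subset hj (t.2.1.trans (Finset.erase_subset _ _)),
      by
        rw [Finset.card_insert_of_notMem (fun h => (Finset.mem_erase.mp (t.2.1 h)).1 rfl),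
          t.2.2]⟩⟩

end Koszul

/-! Induction on `A`. Let `j = max A` and write `∂_j z = d w`. Subtracting the boundary
`d (w ∧ e_j)` from `z` achieves `∂_j z = 0`, so that `z` becomes a cycle of `K(y_{A∖j})`. Its
components `∂_k z`, `k ≠ j`, are still boundaries: if `∂_k z = d u`, then `∂_j u` is a cycle over
`A ∖ {j, k}`, all of whose elements are `< j`, so `y_j ∂_j u` is a boundary; and `y_j ∂_j u` is,
up to sign, the difference between `∂_k z` and `d u` restricted to `A ∖ j`. By induction `z` is
a boundary over `A ∖ j`, hence over `A`. -/

theorem Finset.sum_sum_erase_eq_zero_of_antisymm {α β : Type*} [DecidableEq α] [AddCommGroup β]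
    (s : Finset α) (f : α → α → β) (hf : ∀ a ∈ s, ∀ b ∈ s, a ≠ b → f b a = -f a b) :
    ∑ a ∈ s, ∑ b ∈ s.erase a, f a b = 0 := by
  rw [← sum_finset_product' s.offDiag s (fun a => s.erase a)
    (by simp [and_comm, ne_comm])]
  refine sum_involution (fun p _ => p.swap) ?_ ?_ ?_ ?_
  · rintro ⟨a, b⟩ h
    simp only [mem_offDiag] at h
    simp [hf a h.1 b h.2.1 h.2.2]
  · rintro ⟨a, b⟩ h -
    simpa [Prod.ext_iff, eq_comm] using (mem_offDiag.mp h).2.2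
  · rintro ⟨a, b⟩ h
    simp only [mem_offDiag] at h ⊢
    exact ⟨h.2.1, h.1, Ne.symm h.2.2⟩
  · exact fun _ _ => rfl

theorem Finset.card_filter_insert_of_notMem {α : Type*} [DecidableEq α] (p : α → Prop)
    [DecidablePred p] {a : α} {s : Finset α} (ha : a ∉ s) :
    #((insert a s).filter p) = #(s.filter p) + if p a then 1 else 0 := by
  rw [filter_insert]
  split_ifs
  · exact card_insert_of_notMem fun h => ha (mem_filter.mp h).1
  · rfl

theorem Finset.insert_subset_and_card_insert {α : Type*} [DecidableEq α] {A t : Finset α} {j : α}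
    (hj : j ∈ A) {n : ℕ} (ht : t ⊆ A.erase j ∧ #t = n) :
    insert j t ⊆ A ∧ #(insert j t) = n + 1 :=
  ⟨insert_subset hj (ht.1.trans (erase_subset _ _)),
    by rw [card_insert_of_notMem fun h => (mem_erase.mp (ht.1 h)).1 rfl, ht.2]⟩

theorem neg_one_pow_smul_neg_one_pow_smul {M : Type*} [AddCommGroup M] (c : ℕ) (w : M) :
    ((-1 : ℤ) ^ c) • ((-1 : ℤ) ^ c) • w = w := by
  rw [smul_smul, ← pow_add, ← two_mul, pow_mul]
  norm_num

namespace KChain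

variable {ι : Type*} {M : Type*} [AddCommGroup M]

def restrict {A B : Finset ι} (h : B ⊆ A) {n : ℕ} (f : KChain ι A M n) : KChain ι B M n :=
  fun t => f ⟨t.1, t.2.1.trans h, t.2.2⟩

lemma restrict_mem_kBnd_of_eq {R : Type*} [CommRing R] [Module R M] [LinearOrder ι] (y : ι → R)
    {B C : Finset ι} (hBC : B = C) {n : ℕ} {f : KChain ι C M n} (hf : f ∈ kBnd y C M n) :
    restrict hBC.subset f ∈ kBnd y B M n := by
  subst hBC
  exact hf

variable [DecidableEq ι]

/-- Chains as functions on all finsets, so that formulas need no admissibility proofs. -/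
def eval {A : Finset ι} {n : ℕ} (f : KChain ι A M n) (s : Finset ι) : M :=
  if h : s ⊆ A ∧ s.card = n then f ⟨s, h⟩ else 0

lemma eval_eq {A : Finset ι} {n : ℕ} (f : KChain ι A M n) {s : Finset ι}
    (h : s ⊆ A ∧ s.card = n) : eval f s = f ⟨s, h⟩ :=
  dif_pos h

def extendByZero (A : Finset ι) {B : Finset ι} {n : ℕ} (f : KChain ι B M n) : KChain ι A M n :=
  fun s => eval f s.1

lemma restrict_extendByZero {A B : Finset ι} (h : B ⊆ A) {n : ℕ} (f : KChain ι B M n) :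
    restrict h (extendByZero A f) = f :=
  funext fun t => eval_eq f t.2

end KChain

section KoszulComplex

variable {R : Type*} [CommRing R] {ι : Type*} [LinearOrder ι] {M : Type*} [AddCommGroup M]
  [Module R M]

lemma smul_mem_kBnd_of_smul_eq_zero (y : ι → R) {C : Finset ι} {n : ℕ} {c : R}
    (hc : ∀ h : KoszulH y C M n, c • h = 0) {x : KChain ι C M n} (hx : x ∈ kCyc y C M n) :
    c • x ∈ kBnd y C M n := by
  have := hc (Submodule.Quotient.mk ⟨x, hx⟩)
  rwa [← Submodule.Quotient.mk_smul, Submodule.Quotient.mk_eq_zero] at this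

variable [DecidableEq ι]

/-- The chain `f ∧ e_j`. -/
def KChain.wedge (j : ι) {A : Finset ι} {n : ℕ} (f : KChain ι (A.erase j) M n) :
    KChain ι A M (n + 1) :=
  fun s => ((-1 : ℤ) ^ #(s.1.filter (j < ·))) • KChain.eval f (s.1.erase j)

lemma kd_apply (y : ι → R) (A : Finset ι) (n : ℕ) (f : KChain ι A M (n + 1))
    (t : {s : Finset ι // s ⊆ A ∧ s.card = n}) :
    kd y A n f t = ∑ k ∈ A \ t.1,
      ((-1 : ℤ) ^ #(t.1.filter (· < k))) • y k • KChain.eval f (insert k t.1) := by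
  obtain rfl : ‹DecidableEq ι› = LinearOrder.toDecidableEq := Subsingleton.elim _ _
  rw [← sum_attach]
  refine sum_congr rfl fun k _ => ?_
  rw [KChain.eval_eq]

lemma delPart_apply {A : Finset ι} {j : ι} (hj : j ∈ A) {n : ℕ} (z : KChain ι A M (n + 1))
    (t : {s : Finset ι // s ⊆ A.erase j ∧ s.card = n}) :
    delPart A j hj z t = ((-1 : ℤ) ^ #(t.1.filter (j < ·))) • KChain.eval z (insert j t.1) := by
  rw [delPart, KChain.eval_eq]

lemma delPart_sub {A : Finset ι} {j : ι} (hj : j ∈ A) {n : ℕ} (f g : KChain ι A M (n + 1)) :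
    delPart A j hj (f - g) = delPart A j hj f - delPart A j hj g :=
  funext fun _ => smul_sub _ _ _

lemma kd_kd (y : ι → R) (A : Finset ι) (n : ℕ) (u : KChain ι A M (n + 2)) :
    kd y A n (kd y A (n + 1) u) = 0 := by
  funext ⟨t, htA, htc⟩
  rw [kd_apply, Pi.zero_apply]
  have hS : ∀ x ∈ A \ t, A \ insert x t = (A \ t).erase x := fun x _ => by
    ext a; simp only [mem_sdiff, mem_insert, mem_erase, not_or]; tauto
  calc _ = ∑ x ∈ A \ t, ∑ k ∈ (A \ t).erase x,
        ((-1 : ℤ) ^ (#(t.filter (· < x)) + #(t.filter (· < k)) + if x < k then 1 else 0)) •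
          (y x * y k) • KChain.eval u (insert k (insert x t)) := by
        refine sum_congr rfl fun x hx => ?_
        obtain ⟨hxA, hxt⟩ := mem_sdiff.mp hx
        rw [KChain.eval_eq _ ⟨insert_subset hxA htA, by rw [card_insert_of_notMem hxt, htc]⟩,
          kd_apply, hS x hx, smul_sum, smul_sum]
        refine sum_congr rfl fun k _ => ?_
        rw [card_filter_insert_of_notMem _ hxt, smul_comm (y x), smul_smul, smul_smul,
          ← pow_add, ← add_assoc]
    _ = 0 := by
        refine sum_sum_erase_eq_zero_of_antisymm _ _ fun x _ k _ hxk => ?_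
        rw [mul_comm (y k), insert_comm, ← neg_smul]
        congr 1
        rcases hxk.lt_or_gt with h | h <;> simp [h, h.not_gt, pow_add, add_comm]

lemma delPart_kd (y : ι → R) {A : Finset ι} {j : ι} (hj : j ∈ A) (n : ℕ)
    (u : KChain ι A M (n + 2)) :
    delPart A j hj (kd y A (n + 1) u) = kd y (A.erase j) n (delPart A j hj u) := by
  funext ⟨t, htA, htc⟩
  have hjt : j ∉ t := fun h => (mem_erase.mp (htA h)).1 rfl
  have hS : A \ insert j t = A.erase j \ t := by
    ext a; simp only [mem_sdiff, mem_insert, mem_erase, not_or]; tauto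
  rw [delPart_apply, KChain.eval_eq _ (insert_subset_and_card_insert hj ⟨htA, htc⟩), kd_apply,
    kd_apply, hS, smul_sum]
  refine sum_congr rfl fun x hx => ?_
  obtain ⟨hxA, hxt⟩ := mem_sdiff.mp hx
  rw [KChain.eval_eq _ ⟨insert_subset hxA htA, by rw [card_insert_of_notMem hxt, htc]⟩,
    delPart_apply, insert_comm x j, smul_comm (y x), smul_smul, smul_smul, ← pow_add, ← pow_add,
    card_filter_insert_of_notMem _ hjt, card_filter_insert_of_notMem _ hxt]
  ring_nf

/-- `K(y_A)` as the mapping cone of `y_j` on `K(y_{A∖j})`; maximality of `j` fixes the signs. -/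
lemma restrict_kd_of_forall_le (y : ι → R) {A : Finset ι} {j : ι} (hj : j ∈ A)
    (hmax : ∀ a ∈ A, a ≤ j) (n : ℕ) (f : KChain ι A M (n + 1)) :
    KChain.restrict (A.erase_subset j) (kd y A n f) =
      kd y (A.erase j) n (KChain.restrict (A.erase_subset j) f) +
        ((-1 : ℤ) ^ n) • y j • delPart A j hj f := by
  funext ⟨t, htA, htc⟩
  have hjt : j ∉ t := fun h => (mem_erase.mp (htA h)).1 rfl
  have hlt : ∀ a ∈ t, a < j := fun a ha =>
    lt_of_le_of_ne (hmax a (mem_of_mem_erase (htA ha))) (mem_erase.mp (htA ha)).1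
  have hS : A \ t = insert j (A.erase j \ t) := by
    ext a
    by_cases haj : a = j
    · subst haj; simp [hj, hjt]
    · simp [haj]
  rw [Pi.add_apply, KChain.restrict, kd_apply, kd_apply, hS,
    sum_insert (by simp), add_comm]
  congr 1
  · refine sum_congr rfl fun x hx => ?_
    obtain ⟨hxA, hxt⟩ := mem_sdiff.mp hx
    have hxt' : insert x t ⊆ A.erase j ∧ #(insert x t) = n + 1 :=
      ⟨insert_subset hxA htA, by rw [card_insert_of_notMem hxt, htc]⟩
    rw [KChain.eval_eq _ hxt', KChain.eval_eq _ ⟨hxt'.1.trans (erase_subset _ _), hxt'.2⟩]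
    rfl
  · rw [Pi.smul_apply, Pi.smul_apply, delPart_apply, filter_true_of_mem hlt,
      filter_false_of_mem fun a ha => (hlt a ha).not_gt, card_empty, pow_zero, one_smul]
    simp only [htc]

lemma delPart_eq_zero_iff {A : Finset ι} {j : ι} (hj : j ∈ A) {n : ℕ}
    {g : KChain ι A M (n + 1)} :
    delPart A j hj g = 0 ↔ ∀ s : {s : Finset ι // s ⊆ A ∧ s.card = n + 1}, j ∈ s.1 → g s = 0 := by
  refine ⟨fun hg s hjs => ?_, fun hg => funext fun t => ?_⟩
  · have ht : s.1.erase j ⊆ A.erase j ∧ #(s.1.erase j) = n :=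
      ⟨erase_subset_erase _ s.2.1, by rw [card_erase_of_mem hjs, s.2.2, Nat.add_sub_cancel]⟩
    have := congrArg (((-1 : ℤ) ^ #((s.1.erase j).filter (j < ·))) • ·) (congrFun hg ⟨_, ht⟩)
    rwa [delPart_apply, neg_one_pow_smul_neg_one_pow_smul, insert_erase hjs,
      KChain.eval_eq _ s.2, Pi.zero_apply, smul_zero] at this
  · rw [delPart_apply, KChain.eval_eq _ (insert_subset_and_card_insert hj t.2),
      hg _ (mem_insert_self j t.1), smul_zero, Pi.zero_apply]

lemma eq_of_delPart_eq_zero_of_restrict_eq {A : Finset ι} {j : ι} (hj : j ∈ A) {n : ℕ}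
    {f g : KChain ι A M (n + 1)} (hf : delPart A j hj f = 0) (hg : delPart A j hj g = 0)
    (h : KChain.restrict (A.erase_subset j) f = KChain.restrict (A.erase_subset j) g) :
    f = g := by
  funext s
  by_cases hjs : j ∈ s.1
  · rw [(delPart_eq_zero_iff hj).mp hf s hjs, (delPart_eq_zero_iff hj).mp hg s hjs]
  · exact congrFun h ⟨s.1, subset_erase.mpr ⟨s.2.1, hjs⟩, s.2.2⟩

lemma delPart_delPart_eq_zero {A : Finset ι} {j k : ι} (hj : j ∈ A) (hk : k ∈ A)
    (hjk : j ∈ A.erase k) {n : ℕ} {z : KChain ι A M (n + 2)} (hz : delPart A j hj z = 0) :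
    delPart (A.erase k) j hjk (delPart A k hk z) = 0 := by
  rw [delPart_eq_zero_iff] at hz ⊢
  intro s hjs
  rw [delPart_apply, KChain.eval_eq _ (insert_subset_and_card_insert hk s.2),
    hz _ (mem_insert_of_mem hjs), smul_zero]

lemma delPart_wedge {A : Finset ι} {j : ι} (hj : j ∈ A) {n : ℕ}
    (f : KChain ι (A.erase j) M n) : delPart A j hj (KChain.wedge j f) = f := by
  funext t
  have hjt : j ∉ t.1 := fun h => (mem_erase.mp (t.2.1 h)).1 rfl
  rw [delPart_apply, KChain.eval_eq _ (insert_subset_and_card_insert hj t.2), KChain.wedge,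
    filter_insert, if_neg (lt_irrefl j), erase_insert hjt, neg_one_pow_smul_neg_one_pow_smul,
    KChain.eval_eq _ t.2]

lemma delPart_extendByZero {A : Finset ι} {j : ι} (hj : j ∈ A) {n : ℕ}
    (f : KChain ι (A.erase j) M (n + 1)) : delPart A j hj (KChain.extendByZero A f) = 0 := by
  funext t
  have hjt : ¬(insert j t.1 ⊆ A.erase j ∧ #(insert j t.1) = n + 1) := fun h =>
    (mem_erase.mp (h.1 (mem_insert_self j _))).1 rfl
  rw [delPart_apply, KChain.eval_eq _ (insert_subset_and_card_insert hj t.2),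
    KChain.extendByZero, KChain.eval, dif_neg hjt, smul_zero, Pi.zero_apply]

lemma delPart_restrict {A B : Finset ι} (h : B ⊆ A) {k : ι} (hk : k ∈ B) {n : ℕ}
    (z : KChain ι A M (n + 1)) :
    delPart B k hk (KChain.restrict h z) =
      KChain.restrict (erase_subset_erase k h) (delPart A k (h hk) z) :=
  rfl

lemma delPart_mem_kCyc (y : ι → R) {A : Finset ι} {j k : ι} (hj : j ∈ A) (hk : k ∈ A)
    (hjk : j ∈ A.erase k) {n : ℕ} {z : KChain ι A M (n + 1)} (hz : delPart A j hj z = 0)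
    {u : KChain ι (A.erase k) M (n + 1)} (hu : kd y (A.erase k) n u = delPart A k hk z) :
    delPart (A.erase k) j hjk u ∈ kCyc y ((A.erase k).erase j) M n := by
  cases n with
  | zero => exact Submodule.mem_top
  | succ n =>
    exact LinearMap.mem_ker.mpr <| by
      rw [← delPart_kd, hu, delPart_delPart_eq_zero hj hk hjk hz]

lemma delPart_restrict_mem_kBnd (y : ι → R) {i : ℕ}
    (hann : ∀ (C : Finset ι) (s : ι), (∀ a ∈ C, a < s) → ∀ h : KoszulH y C M i, y s • h = 0)
    {A : Finset ι} {j k : ι} (hj : j ∈ A) (hmax : ∀ a ∈ A, a ≤ j)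
    (hk : k ∈ A.erase j) {z : KChain ι A M (i + 1)} (hz : delPart A j hj z = 0)
    (hzk : delPart A k (mem_of_mem_erase hk) z ∈ kBnd y (A.erase k) M i) :
    delPart (A.erase j) k hk (KChain.restrict (A.erase_subset j) z) ∈
      kBnd y ((A.erase j).erase k) M i := by
  obtain ⟨u, hu⟩ := hzk
  have hjk : j ∈ A.erase k := mem_erase.mpr ⟨(ne_of_mem_erase hk).symm, hj⟩
  have hlt : ∀ a ∈ (A.erase k).erase j, a < j := fun a ha =>
    lt_of_le_of_ne (hmax a (mem_of_mem_erase (mem_of_mem_erase ha))) (ne_of_mem_erase ha)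
  obtain ⟨v, hv⟩ := smul_mem_kBnd_of_smul_eq_zero y (hann _ j hlt)
    (delPart_mem_kCyc y hj _ hjk hz hu)
  have hsplit := restrict_kd_of_forall_le y hjk (fun a ha => hmax a (mem_of_mem_erase ha)) i u
  rw [hu, ← hv, ← map_zsmul, ← map_add] at hsplit
  rw [delPart_restrict]
  exact KChain.restrict_mem_kBnd_of_eq y erase_right_comm (hsplit ▸ LinearMap.mem_range_self _ _)

theorem mem_kBnd_of_forall_delPart_mem_kBnd (y : ι → R) {i : ℕ}
    (hann : ∀ (C : Finset ι) (s : ι), (∀ a ∈ C, a < s) → ∀ h : KoszulH y C M i, y s • h = 0)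
    (A : Finset ι) (z : KChain ι A M (i + 1))
    (hz : z ∈ kCyc y A M (i + 1))
    (hbd : ∀ j (hj : j ∈ A), delPart A j hj z ∈ kBnd y (A.erase j) M i) :
    z ∈ kBnd y A M (i + 1) := by
  induction A using strongInduction with | H A ih => ?_
  obtain rfl | hA := A.eq_empty_or_nonempty
  · exact ⟨0, funext fun s => absurd s.2.2 (by simp [subset_empty.mp s.2.1])⟩
  set j := A.max' hA
  have hj : j ∈ A := A.max'_mem hA
  have hmax : ∀ a ∈ A, a ≤ j := A.le_max'
  obtain ⟨w, hw⟩ := hbd j hj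
  set z' := z - kd y A (i + 1) (KChain.wedge j w)
  have hz'j : delPart A j hj z' = 0 := by
    rw [delPart_sub, delPart_kd, delPart_wedge, hw, sub_self]
  have hz' : kd y A i z' = 0 := by
    rw [map_sub, LinearMap.mem_ker.mp hz, kd_kd, sub_zero]
  have hres : KChain.restrict (A.erase_subset j) z' ∈ kCyc y (A.erase j) M (i + 1) := by
    have := restrict_kd_of_forall_le y hj hmax i z'
    rwa [hz', hz'j, smul_zero, smul_zero, add_zero, eq_comm] at this
  obtain ⟨v, hv⟩ := ih _ (erase_ssubset hj) _ hres fun k hk =>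
    delPart_restrict_mem_kBnd y hann hj hmax hk hz'j <| by
      rw [delPart_sub, delPart_kd]
      exact sub_mem (hbd k _) (LinearMap.mem_range_self _ _)
  have hv' : kd y A (i + 1) (KChain.extendByZero A v) = z' := by
    refine eq_of_delPart_eq_zero_of_restrict_eq hj ?_ hz'j ?_
    · rw [delPart_kd, delPart_extendByZero, map_zero]
    · rw [restrict_kd_of_forall_le y hj hmax, KChain.restrict_extendByZero, hv,
        delPart_extendByZero, smul_zero, smul_zero, add_zero]
  exact ⟨KChain.extendByZero A v + KChain.wedge j w, by rw [map_add, hv', sub_add_cancel]⟩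

end KoszulComplex

theorem koszul_connecting_map_injective_general
    {R : Type*} [CommRing R] {M : Type*} [AddCommGroup M] [Module R M]
    (r : ℕ) (y : Fin r → R) (i : ℕ)
    (hann : ∀ A : Finset (Fin r), ∀ s : Fin r, (∀ a ∈ A, a < s) →
      ∀ h : KoszulH y A M i, y s • h = 0)
    (A : Finset (Fin r)) (z : KChain (Fin r) A M (i + 1))
    (hz : z ∈ kCyc y A M (i + 1))
    (hbd : ∀ j : Fin r, ∀ hj : j ∈ A, delPart (i := i) (N := M) A j hj z ∈ kBnd y (A.erase j) M i) :
    z ∈ kBnd y A M (i + 1) :=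
  mem_kBnd_of_forall_delPart_mem_kBnd y hann A z hz hbd

/-- **Lemma (injectivity of the connecting map on Koszul homology).**
Let `R` be a commutative ring, `M` an `R`-module and `y 1, …, y r ∈ R`.  Fix `i > 0` and
suppose that for every subset `A ⊆ {1,…,r}` and every `s` with `max A < s ≤ r` one has
`y s • H_i(y_A; M) = 0`.  Then for every `A ⊆ {1,…,r}` the canonical map
`∂ : H_{i+1}(y_A; M) → ⊕_{j ∈ A} H_i(y_{A∖{j}}; M)` is injective; equivalently (and this is
how we phrase it), whenever a cycle `z` for `y_A` in degree `i+1` has all of its components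
`∂_j z` equal to boundaries, `z` is itself a boundary. -/
theorem koszul_connecting_map_injective
    {R : Type*} [CommRing R] {M : Type*} [AddCommGroup M] [Module R M]
    (r : ℕ) (y : Fin r → R) (i : ℕ) (hi : 0 < i)
    (hann : ∀ A : Finset (Fin r), ∀ s : Fin r, (∀ a ∈ A, a < s) →
      ∀ h : KoszulH y A M i, y s • h = 0)
    (A : Finset (Fin r)) (z : KChain (Fin r) A M (i + 1))
    (hz : z ∈ kCyc y A M (i + 1))
    (hbd : ∀ j : Fin r, ∀ hj : j ∈ A, delPart (i := i) (N := M) A j hj z ∈ kBnd y (A.erase j) M i) :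
    z ∈ kBnd y A M (i + 1) :=
  koszul_connecting_map_injective_general r y i hann A z hz hbd
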